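/- Fix m ≥ 1 and integers μ_k < ν_k (k = 1,…,m). Let A₁,…,A_k be L-equivalence classes of reduced paradiagrams of length m with nonempty initial paraboxes, let A be an L-equivalence class with nonempty initial parabox such that U(A) ⊆ U(A₁) ∪ ⋯ ∪ U(A_k), and let B = M(A) be its paramitosis. Then (U(A₁) ∪ ⋯ ∪ U(A_k)) ∩ U(B) = U(A); in particular, U(A) = U(B) ∩ {y ∈ ℝ^m : y₁ = μ₁}. -/
import Mathlib


/-- The alphabet `{0, 1, *}` of paradiagrams. -/
inductive PD where
  | zero : PD
  | one : PD
  | star : PD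
deriving DecidableEq

/-- A paradiagram is reduced if no entry `1` is immediately followed by an entry `0`. -/
def Reduced {m : ℕ} (δ : Fin m → PD) : Prop :=
  ∀ (j : ℕ) (h : j + 1 < m),
    ¬(δ ⟨j, Nat.lt_of_succ_lt h⟩ = PD.one ∧ δ ⟨j + 1, h⟩ = PD.zero)

/-- The face `F(δ) = {y ∈ Π : y_k = μ_k if δ_k = 0, y_k = ν_k if δ_k = 1}` of the
parallelepiped `Π = {y : μ_k ≤ y_k ≤ ν_k}`. -/
def Face {m : ℕ} (μ ν : Fin m → ℤ) (δ : Fin m → PD) : Set (Fin m → ℝ) :=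
  {y | ∀ k, ((μ k : ℝ) ≤ y k ∧ y k ≤ (ν k : ℝ)) ∧
            (δ k = PD.zero → y k = (μ k : ℝ)) ∧ (δ k = PD.one → y k = (ν k : ℝ))}

/-- An L-move replaces a consecutive pair of entries `(*, 0)` by `(1, *)`. -/
def LMove {m : ℕ} (δ δ' : Fin m → PD) : Prop :=
  ∃ (j : ℕ) (h : j + 1 < m),
    δ ⟨j, Nat.lt_of_succ_lt h⟩ = PD.star ∧ δ ⟨j + 1, h⟩ = PD.zero ∧
    δ' ⟨j, Nat.lt_of_succ_lt h⟩ = PD.one ∧ δ' ⟨j + 1, h⟩ = PD.star ∧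
    ∀ k : Fin m, (k : ℕ) ≠ j → (k : ℕ) ≠ j + 1 → δ' k = δ k

/-- L-equivalence: the equivalence relation generated by L-moves. -/
def LEquiv {m : ℕ} (δ δ' : Fin m → PD) : Prop := Relation.EqvGen LMove δ δ'

/-- An L-equivalence class of reduced paradiagrams. -/
def IsLClass {m : ℕ} (A : Set (Fin m → PD)) : Prop :=
  ∃ δ₀, Reduced δ₀ ∧ A = {δ | LEquiv δ₀ δ}

/-- `U(A) = ⋃_{δ ∈ A} F(δ)`. -/
def UF {m : ℕ} (μ ν : Fin m → ℤ) (A : Set (Fin m → PD)) : Set (Fin m → ℝ) :=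
  ⋃ δ ∈ A, Face μ ν δ

/-- The number of `*` entries of a paradiagram. -/
def stars {m : ℕ} (δ : Fin m → PD) : ℕ :=
  (Finset.univ.filter fun k => δ k = PD.star).card

/-- The size of the initial parabox: the number of leading `0` entries. -/
def initSize {m : ℕ} (δ : Fin m → PD) : ℕ :=
  ((List.ofFn δ).takeWhile (fun x => decide (x = PD.zero))).length

/-- The paramitosis of a paradiagram `δ` with initial parabox `0^a`: the set of
paradiagrams obtained by replacing the initial segment `0^a` by `1^j * 0^{a−1−j}`
for `j = 0, …, a−1` (empty if `a = 0`). -/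
def Mop {m : ℕ} (δ : Fin m → PD) : Set (Fin m → PD) :=
  {δ' | ∃ j : ℕ, j < initSize δ ∧ δ' = fun k : Fin m =>
      if k.val < j then PD.one
      else if k.val = j then PD.star
      else if k.val < initSize δ then PD.zero
      else δ k}

/-- Paramitosis of a set of paradiagrams. -/
def MSet {m : ℕ} (A : Set (Fin m → PD)) : Set (Fin m → PD) := ⋃ δ ∈ A, Mop δ

/-- `𝒮(S) = ∑_{y ∈ S ∩ ℤ^m} t^{σ(y)} ∈ ℤ[t,t⁻¹]`, where `σ(y) = y₁ + ⋯ + y_m`. -/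
noncomputable def charS {m : ℕ} (S : Set (Fin m → ℝ)) : LaurentPolynomial ℤ :=
  ∑ᶠ z ∈ {z : Fin m → ℤ | (fun k => (z k : ℝ)) ∈ S}, LaurentPolynomial.T (∑ k, z k)

lemma initSize_spec {m : ℕ} (δ : Fin m → PD) (k : Fin m) (hk : (k : ℕ) < initSize δ) :
    δ k = PD.zero := by
  unfold initSize at hk
  have hpre := List.takeWhile_prefix (l := List.ofFn δ) (p := fun x => decide (x = PD.zero))
  have hkl : (k : ℕ) < (List.ofFn δ).length := lt_of_lt_of_le hk hpre.length_le
  have hget := hpre.getElem hk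
  have hmem : ((List.ofFn δ).takeWhile (fun x => decide (x = PD.zero)))[(k:ℕ)]'hk ∈
      (List.ofFn δ).takeWhile (fun x => decide (x = PD.zero)) := List.getElem_mem _
  have hpk := List.mem_takeWhile_imp hmem
  rw [hget] at hpk
  have hof : (List.ofFn δ)[(k:ℕ)]'hkl = δ k := by
    simp [List.getElem_ofFn]
  rw [hof] at hpk
  simpa using hpk

/-- let `A₁, …, A_K` be L-classes with nonempty initial paraboxes, let `A` be an
L-class with nonempty initial parabox such that `U(A) ⊆ U(A₁) ∪ ⋯ ∪ U(A_K)`, and let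
`B = M(A)` be its paramitosis.  Then `(U(A₁) ∪ ⋯ ∪ U(A_K)) ∩ U(B) = U(A)`; in particular,
`U(A) = U(B) ∩ {y : y₁ = μ₁}`. -/
theorem stmt_16 (m : ℕ) (hm : 1 ≤ m) (μ ν : Fin m → ℤ) (h : ∀ k, μ k < ν k)
    (K : ℕ) (A' : Fin K → Set (Fin m → PD))
    (hA' : ∀ j, IsLClass (A' j)) (hA'init : ∀ j, ∀ δ ∈ A' j, 1 ≤ initSize δ)
    (A : Set (Fin m → PD)) (hA : IsLClass A) (hAinit : ∀ δ ∈ A, 1 ≤ initSize δ)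
    (hsub : UF μ ν A ⊆ ⋃ j, UF μ ν (A' j)) :
    (⋃ j, UF μ ν (A' j)) ∩ UF μ ν (MSet A) = UF μ ν A ∧
    UF μ ν A = UF μ ν (MSet A) ∩ {y : Fin m → ℝ | y ⟨0, hm⟩ = (μ ⟨0, hm⟩ : ℝ)} := by
  have hμν : (μ ⟨0, hm⟩ : ℝ) < (ν ⟨0, hm⟩ : ℝ) := by exact_mod_cast h ⟨0, hm⟩
  -- U(A) ⊆ U(M(A)) via the j = 0 mitosis element
  have hAB : UF μ ν A ⊆ UF μ ν (MSet A) := by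
    intro y hy
    rcases Set.mem_iUnion₂.mp hy with ⟨δ, hδA, hyF⟩
    have ha : 1 ≤ initSize δ := hAinit δ hδA
    refine Set.mem_iUnion₂.mpr ⟨(fun k : Fin m => if (k : ℕ) < 0 then PD.one
        else if (k : ℕ) = 0 then PD.star
        else if (k : ℕ) < initSize δ then PD.zero else δ k), ?_, ?_⟩
    · exact Set.mem_iUnion₂.mpr ⟨δ, hδA, ⟨0, ha, rfl⟩⟩
    · intro k
      refine ⟨(hyF k).1, ?_, ?_⟩
      · intro hk
        simp only [Nat.not_lt_zero, if_false] at hk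
        by_cases h0 : (k : ℕ) = 0
        · rw [if_pos h0] at hk; exact absurd hk (by decide)
        · rw [if_neg h0] at hk
          by_cases h1 : (k : ℕ) < initSize δ
          · exact (hyF k).2.1 (initSize_spec δ k h1)
          · rw [if_neg h1] at hk; exact (hyF k).2.1 hk
      · intro hk
        simp only [Nat.not_lt_zero, if_false] at hk
        by_cases h0 : (k : ℕ) = 0
        · rw [if_pos h0] at hk; exact absurd hk (by decide)
        · rw [if_neg h0] at hk
          by_cases h1 : (k : ℕ) < initSize δ
          · rw [if_pos h1] at hk; exact absurd hk (by decide)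
          · rw [if_neg h1] at hk; exact (hyF k).2.2 hk
  -- U(M(A)) ∩ {y₀ = μ₀} ⊆ U(A)
  have hBA : UF μ ν (MSet A) ∩ {y : Fin m → ℝ | y ⟨0, hm⟩ = (μ ⟨0, hm⟩ : ℝ)} ⊆ UF μ ν A := by
    rintro y ⟨hyB, hy0⟩
    rcases Set.mem_iUnion₂.mp hyB with ⟨δ', hδ', hyF⟩
    rcases Set.mem_iUnion₂.mp hδ' with ⟨δ, hδA, j, hj, rfl⟩
    rcases Nat.eq_zero_or_pos j with hj0 | hjpos
    · subst hj0
      refine Set.mem_iUnion₂.mpr ⟨δ, hδA, ?_⟩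
      intro k
      refine ⟨(hyF k).1, ?_, ?_⟩
      · intro hk
        by_cases h0 : (k : ℕ) = 0
        · have hk0 : k = ⟨0, hm⟩ := Fin.ext h0
          rw [hk0]; exact hy0
        · by_cases h1 : (k : ℕ) < initSize δ
          · refine (hyF k).2.1 ?_
            show (if (k : ℕ) < 0 then PD.one else if (k : ℕ) = 0 then PD.star
              else if (k : ℕ) < initSize δ then PD.zero else δ k) = PD.zero
            simp [h0, h1]
          · refine (hyF k).2.1 ?_
            show (if (k : ℕ) < 0 then PD.one else if (k : ℕ) = 0 then PD.star
              else if (k : ℕ) < initSize δ then PD.zero else δ k) = PD.zero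
            simp [h0, h1, hk]
      · intro hk
        have h1 : ¬ (k : ℕ) < initSize δ := by
          intro h1; rw [initSize_spec δ k h1] at hk; exact PD.noConfusion hk
        have h0 : (k : ℕ) ≠ 0 := by
          intro h0; apply h1; rw [h0]; exact hAinit δ hδA
        refine (hyF k).2.2 ?_
        show (if (k : ℕ) < 0 then PD.one else if (k : ℕ) = 0 then PD.star
          else if (k : ℕ) < initSize δ then PD.zero else δ k) = PD.one
        simp [h0, h1, hk]
    · exfalso
      have h00 : ((⟨0, hm⟩ : Fin m) : ℕ) < j := hjpos
      have := (hyF ⟨0, hm⟩).2.2 (by simp [h00])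
      rw [hy0] at this
      linarith
  -- faces of paradiagrams with nonempty initial parabox lie in the hyperplane
  have hhyp : ∀ (T : Set (Fin m → PD)), (∀ δ ∈ T, 1 ≤ initSize δ) →
      UF μ ν T ⊆ {y : Fin m → ℝ | y ⟨0, hm⟩ = (μ ⟨0, hm⟩ : ℝ)} := by
    intro T hT y hy
    rcases Set.mem_iUnion₂.mp hy with ⟨δ, hδ, hyF⟩
    exact (hyF ⟨0, hm⟩).2.1 (initSize_spec δ ⟨0, hm⟩ (hT δ hδ))
  have hpart2 : UF μ ν A = UF μ ν (MSet A) ∩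
      {y : Fin m → ℝ | y ⟨0, hm⟩ = (μ ⟨0, hm⟩ : ℝ)} :=
    subset_antisymm (fun y hy => ⟨hAB hy, hhyp A hAinit hy⟩) hBA
  refine ⟨subset_antisymm ?_ ?_, hpart2⟩
  · rintro y ⟨hy1, hy2⟩
    rcases Set.mem_iUnion.mp hy1 with ⟨j, hj⟩
    exact hBA ⟨hy2, hhyp (A' j) (hA'init j) hj⟩
  · intro y hy
    exact ⟨hsub hy, hAB hy⟩
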